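/- arXiv:1611.05543 — 7 statements merged into one kernel-verified Lean document; each statement's English description precedes it below -/
import Mathlib

section
/- For every integer N ≥ 7, the partial sum of the Poisson distribution with parameter 2N up to N−1 satisfies ∑_{m=0}^{N-1} (2N)^m e^{-2N} / m! ≤ 1/64. -/
/-!
Write t_m = (2N)^m e^{-2N} / m!. Below the mean the terms grow geometrically,
t_m = (m+1)/(2N) · t_{m+1} ≤ (N-1)/(2N) · t_{m+1} for m < N - 1, so the partial sum is at most
t_{N-1} · 2N/(N+1). Passing from N to N+1 multiplies t_{N-1} by 2(1 + 1/N)^N e^{-2} ≤ 2/e, which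
more than compensates the growth of 2N/(N+1); so this bound decreases in N, and at N = 7 it is
checked numerically.
-/

open Real Finset

theorem sum_range_succ_le_div_one_sub_of_le_mul_succ {f : ℕ → ℝ} {q : ℝ} {n : ℕ}
    (hq₀ : 0 ≤ q) (hq₁ : q < 1) (hf₀ : 0 ≤ f 0) (hf : ∀ m < n, f m ≤ q * f (m + 1)) :
    ∑ m ∈ range (n + 1), f m ≤ f n / (1 - q) := by
  have hq : 0 < 1 - q := by linarith
  induction n with
  | zero => simpa using le_div_self hf₀ hq (by linarith)
  | succ n ih =>
    have hsum := ih fun m hm => hf m (by omega)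
    have hstep : f n / (1 - q) ≤ q * f (n + 1) / (1 - q) :=
      div_le_div_of_nonneg_right (hf n (by omega)) hq.le
    calc ∑ m ∈ range (n + 1 + 1), f m
        ≤ q * f (n + 1) / (1 - q) + f (n + 1) := by
          rw [sum_range_succ]; linarith
      _ = f (n + 1) / (1 - q) := by field_simp; ring

noncomputable def poissonTerm (r : ℝ) (m : ℕ) : ℝ := r ^ m * exp (-r) / m.factorial

theorem poissonTerm_nonneg {r : ℝ} (hr : 0 ≤ r) (m : ℕ) : 0 ≤ poissonTerm r m := by
  unfold poissonTerm; positivity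

theorem poissonTerm_succ (r : ℝ) (m : ℕ) :
    poissonTerm r (m + 1) = r / (m + 1) * poissonTerm r m := by
  simp only [poissonTerm, pow_succ, Nat.factorial_succ, Nat.cast_mul, Nat.cast_succ]
  field_simp

theorem sum_range_succ_poissonTerm_le {r : ℝ} {n : ℕ} (hn : n < r) :
    ∑ m ∈ range (n + 1), poissonTerm r m ≤ poissonTerm r n * r / (r - n) := by
  have hr : 0 < r := lt_of_le_of_lt n.cast_nonneg hn
  have hratio : ∀ m < n, poissonTerm r m ≤ n / r * poissonTerm r (m + 1) := by
    intro m hm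
    have hm' : (m : ℝ) + 1 ≤ n := by exact_mod_cast hm
    calc poissonTerm r m = (m + 1) / r * poissonTerm r (m + 1) := by
          rw [poissonTerm_succ]; field_simp
      _ ≤ n / r * poissonTerm r (m + 1) := by
          gcongr; exact poissonTerm_nonneg hr.le _
  calc ∑ m ∈ range (n + 1), poissonTerm r m ≤ poissonTerm r n / (1 - n / r) :=
        sum_range_succ_le_div_one_sub_of_le_mul_succ (by positivity) ((div_lt_one hr).2 hn)
          (poissonTerm_nonneg hr.le 0) hratio
    _ = poissonTerm r n * r / (r - n) := by
        rw [one_sub_div hr.ne']; field_simp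

theorem poissonTerm_two_mul_succ_le (n : ℕ) :
    poissonTerm (2 * (n + 2)) (n + 1) ≤ 2 * exp (-1) * poissonTerm (2 * (n + 1)) n := by
  have hratio : poissonTerm (2 * (n + 2)) (n + 1)
      = 2 * (((n + 2) / (n + 1)) ^ (n + 1) * exp (-2)) * poissonTerm (2 * (n + 1)) n := by
    have hexp : exp (-(2 * ((n : ℝ) + 2))) = exp (-(2 * (n + 1))) * exp (-2) := by
      rw [← exp_add]; ring_nf
    simp only [poissonTerm, hexp, div_pow, mul_pow, Nat.factorial_succ, Nat.cast_mul,
      Nat.cast_succ, pow_succ]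
    field_simp
  have hbase : ((n : ℝ) + 2) / (n + 1) = 1 + ((n + 1 : ℕ) : ℝ)⁻¹ := by
    push_cast; field_simp; ring
  rw [hratio]
  gcongr
  · exact poissonTerm_nonneg (by positivity) n
  · calc ((n + 2) / (n + 1)) ^ (n + 1) * exp (-2) ≤ exp 1 * exp (-2) := by
          rw [hbase]; gcongr; exact one_add_inv_pow_le_exp
      _ = exp (-1) := by rw [← exp_add]; norm_num

theorem antitone_poissonTerm_two_mul_succ_mul_div :
    Antitone fun n : ℕ => poissonTerm (2 * (n + 1)) n * (2 * (n + 1)) / (n + 2) := by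
  refine antitone_nat_of_succ_le fun n => ?_
  have he : (2.7 : ℝ) < exp 1 := lt_trans (by norm_num) exp_one_gt_d9
  have hfactor : 2 * exp (-1) * (2 * ((n : ℝ) + 2)) / (n + 3) ≤ 2 * (n + 1) / (n + 2) := by
    rw [exp_neg, div_le_div_iff₀ (by positivity) (by positivity)]
    field_simp
    nlinarith [mul_le_mul_of_nonneg_right he.le (by positivity : (0 : ℝ) ≤ (n + 1) * (n + 3))]
  have ha := poissonTerm_nonneg (by positivity : (0 : ℝ) ≤ 2 * (n + 1)) n
  push_cast
  rw [show (n : ℝ) + 1 + 1 = n + 2 by ring, show (n : ℝ) + 1 + 2 = n + 3 by ring]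
  calc poissonTerm (2 * (n + 2)) (n + 1) * (2 * (n + 2)) / (n + 3)
      ≤ 2 * exp (-1) * poissonTerm (2 * (n + 1)) n * (2 * (n + 2)) / (n + 3) := by
        gcongr; exact poissonTerm_two_mul_succ_le n
    _ = poissonTerm (2 * (n + 1)) n * (2 * exp (-1) * (2 * (n + 2)) / (n + 3)) := by ring
    _ ≤ poissonTerm (2 * (n + 1)) n * (2 * (n + 1) / (n + 2)) := by gcongr
    _ = poissonTerm (2 * (n + 1)) n * (2 * (n + 1)) / (n + 2) := by ring

-- At N = 7 the bound holds with a margin of only about 3%, hence e to nine digits.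
theorem poissonTerm_fourteen_six_mul_le : poissonTerm 14 6 * 14 / 8 ≤ 1 / 64 := by
  have he : (2.7182818283 : ℝ) ^ 14 ≤ exp 14 := by
    rw [show (14 : ℝ) = (14 : ℕ) by norm_num, ← exp_one_pow]
    gcongr; exact exp_one_gt_d9.le
  have hinv := inv_anti₀ (by positivity) he
  rw [poissonTerm, exp_neg]
  norm_num [Nat.factorial] at hinv ⊢
  linarith

theorem poisson_tail_bound (N : ℕ) (hN : 7 ≤ N) :
    ∑ m ∈ Finset.range N, (2 * N : ℝ) ^ m * Real.exp (-(2 * N : ℝ)) / (Nat.factorial m) ≤ 1 / 64 := by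
  obtain ⟨n, rfl⟩ : ∃ n, N = n + 1 := ⟨N - 1, by omega⟩
  have hn : (n : ℝ) < 2 * ((n + 1 : ℕ) : ℝ) := by push_cast; linarith
  calc ∑ m ∈ range (n + 1), poissonTerm (2 * ((n + 1 : ℕ) : ℝ)) m
      ≤ poissonTerm (2 * (n + 1)) n * (2 * (n + 1)) / (n + 2) := by
        convert sum_range_succ_poissonTerm_le hn using 1; push_cast; ring
    _ ≤ poissonTerm (2 * (6 + 1)) 6 * (2 * (6 + 1)) / (6 + 2) := by
        exact_mod_cast antitone_poissonTerm_two_mul_succ_mul_div (show 6 ≤ n by omega)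
    _ ≤ 1 / 64 := by norm_num [poissonTerm_fourteen_six_mul_le]
end

section
/- For all real numbers α, β with α + β ≠ 0 and all real t, the matrix exponential of t·[[−α, α], [β, −β]] equals (1/(α+β)) · [[β + α·e^{−(α+β)t}, α − α·e^{−(α+β)t}], [β − β·e^{−(α+β)t}, α + β·e^{−(α+β)t}]]. -/
/-!
The rate matrix `M` satisfies `M * M = -(α + β) • M`, so `-(α + β)⁻¹ • M` is idempotent. For an
idempotent `p` every power `(s • p) ^ (n + 1)` equals `s ^ (n + 1) • p`, so the exponential series
collapses to `exp (s • p) = (1 - p) + Real.exp s • p`.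
-/

open NormedSpace
open scoped Nat

section Idempotent

variable {A : Type*} [Ring A] [Algebra ℝ A] [TopologicalSpace A] [IsTopologicalRing A]
  [ContinuousSMul ℝ A] [T2Space A]

theorem IsIdempotentElem.exp_smul {p : A} (hp : IsIdempotentElem p) (s : ℝ) :
    exp (s • p) = (1 - p) + Real.exp s • p := by
  have hterm (n : ℕ) : (n !⁻¹ : ℝ) • (s • p) ^ n =
      (if n = 0 then 1 - p else 0) + ((n !⁻¹ : ℝ) * s ^ n) • p := by
    cases n with
    | zero => simp
    | succ n => simp [smul_pow, hp.pow_succ_eq, mul_smul]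
  have hreal : HasSum (fun n : ℕ => (n !⁻¹ : ℝ) * s ^ n) (Real.exp s) := by
    simpa [Real.exp_eq_exp_ℝ] using exp_series_hasSum_exp' (𝕂 := ℝ) s
  rw [exp_eq_tsum ℝ]
  simp_rw [hterm]
  exact ((hasSum_ite_eq 0 (1 - p)).add (hreal.smul_const p)).tsum_eq

theorem exp_smul_of_mul_self_eq_smul {a : A} {c : ℝ} (hc : c ≠ 0) (ha : a * a = c • a) (t : ℝ) :
    exp (t • a) = 1 + (c⁻¹ * (Real.exp (c * t) - 1)) • a := by
  have hp : IsIdempotentElem (c⁻¹ • a) := by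
    rw [IsIdempotentElem, smul_mul_smul_comm, ha, smul_smul, mul_assoc, inv_mul_cancel₀ hc, mul_one]
  have hta : t • a = (c * t) • (c⁻¹ • a) := by
    rw [smul_smul, mul_right_comm, mul_inv_cancel₀ hc, one_mul]
  rw [hta, hp.exp_smul, smul_smul]
  module

end Idempotent

theorem rateMatrix_mul_self (α β : ℝ) :
    !![-α, α; β, -β] * !![-α, α; β, -β] = (-(α + β)) • !![-α, α; β, -β] := by
  ext i j
  fin_cases i <;> fin_cases j <;> simp [Matrix.mul_apply] <;> ring

theorem exp_two_by_two_rate_matrix (α β t : ℝ) (h : α + β ≠ 0) :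
    exp (t • !![-α, α; β, -β]) =
      (α + β)⁻¹ •
        !![β + α * Real.exp (-(α + β) * t), α - α * Real.exp (-(α + β) * t);
           β - β * Real.exp (-(α + β) * t), α + β * Real.exp (-(α + β) * t)] := by
  rw [exp_smul_of_mul_self_eq_smul (neg_ne_zero.mpr h) (rateMatrix_mul_self α β)]
  generalize Real.exp (-(α + β) * t) = E
  rw [show (-(α + β))⁻¹ * (E - 1) = (α + β)⁻¹ * (1 - E) by rw [inv_neg]; ring]
  ext i j
  fin_cases i <;> fin_cases j <;> simp <;> field_simp <;> ring
end

section
/- Let A be the (N+1)×(N+1) real matrix with A_{n,n} = −1 and A_{n,n+1} = 1 for 0 ≤ n ≤ N−1 and all other entries zero. Then for every real t ≥ 0 and every m with 0 ≤ m ≤ N−1, the (0,m) entry of the matrix exponential e^{tA} equals t^m e^{−t} / m!. -/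
/-!
Write `A = B - 1`, where `B` is the matrix of the map `i ↦ min (i + 1) N`. Then
`e^{tA} = e^{-t} e^{tB}`, and `(B ^ n) 0 j = 1` exactly when `j = min n N`; for `m < N` only the
`n = m` term of the exponential series contributes to the `(0, m)` entry.
-/

open NormedSpace

namespace Matrix

variable {ι : Type*} [Fintype ι] [DecidableEq ι]

theorem pow_apply_of_apply_eq_ite {R : Type*} [Semiring R] (f : ι → ι) (B : Matrix ι ι R)
    (hB : ∀ i j, B i j = if j = f i then 1 else 0) (n : ℕ) (i j : ι) :
    (B ^ n) i j = if j = f^[n] i then 1 else 0 := by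
  induction n generalizing i with
  | zero => exact if_congr eq_comm rfl rfl
  | succ n ih =>
    rw [pow_succ', mul_apply, Finset.sum_eq_single (f i) (fun k _ hk => by simp [hB, hk])
      (by simp), hB, if_pos rfl, one_mul, ih, Function.iterate_succ_apply]

variable {𝕂 : Type*} [RCLike 𝕂]

theorem hasSum_exp_apply (X : Matrix ι ι 𝕂) (i j : ι) :
    HasSum (fun n => (n.factorial⁻¹ : 𝕂) * (X ^ n) i j) (exp X i j) :=
  open scoped Norms.Operator in
  Pi.hasSum.mp (Pi.hasSum.mp (exp_series_hasSum_exp' (𝕂 := 𝕂) X) i) j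

theorem exp_smul_one_add (c : 𝕂) (X : Matrix ι ι 𝕂) : exp (c • 1 + X) = exp c • exp X := by
  have hc : exp (algebraMap 𝕂 (Matrix ι ι 𝕂) c) = algebraMap 𝕂 _ (exp c) := by
    open scoped Norms.Operator in exact (algebraMap_exp_comm c).symm
  rw [exp_add_of_commute _ _ ((Commute.one_left X).smul_left c), ← Algebra.algebraMap_eq_smul_one,
    hc, Algebra.algebraMap_eq_smul_one, smul_one_mul]

end Matrix

theorem Fin.iterate_clamp_succ_zero (N n : ℕ) :
    (fun i : Fin (N + 1) => Fin.clamp (i + 1) N)^[n] 0 = Fin.clamp n N := by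
  induction n with
  | zero => rfl
  | succ n ih =>
    rw [Function.iterate_succ_apply', ih]
    ext
    simp only [Fin.coe_clamp]
    omega

theorem add_one_apply_of_bidiagonal {N : ℕ} {A : Matrix (Fin (N + 1)) (Fin (N + 1)) ℝ}
    (hA : ∀ i j : Fin (N + 1),
      A i j = if (i : ℕ) < N ∧ (j : ℕ) = (i : ℕ) then -1
        else if (i : ℕ) < N ∧ (j : ℕ) = (i : ℕ) + 1 then 1 else 0)
    (i j : Fin (N + 1)) : (A + 1) i j = if j = Fin.clamp (i + 1) N then 1 else 0 := by
  rw [Matrix.add_apply, Matrix.one_apply, hA]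
  simp only [Fin.ext_iff, Fin.coe_clamp]
  have := j.isLt
  split_ifs <;> (try norm_num) <;> omega

theorem exp_entry_of_bidiagonal (N : ℕ) (A : Matrix (Fin (N + 1)) (Fin (N + 1)) ℝ)
    (hA : ∀ i j : Fin (N + 1),
      A i j = if (i : ℕ) < N ∧ (j : ℕ) = (i : ℕ) then -1
        else if (i : ℕ) < N ∧ (j : ℕ) = (i : ℕ) + 1 then 1 else 0) :
    ∀ (t : ℝ), 0 ≤ t → ∀ (m : Fin (N + 1)), (m : ℕ) < N →
      (exp (t • A)) 0 m = t ^ (m : ℕ) * Real.exp (-t) / (Nat.factorial (m : ℕ)) := by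
  intro t _ m hm
  have hpow (n : ℕ) : ((A + 1) ^ n) 0 m = if m = Fin.clamp n N then 1 else 0 := by
    rw [Matrix.pow_apply_of_apply_eq_ite _ _ (add_one_apply_of_bidiagonal hA),
      Fin.iterate_clamp_succ_zero]
  have hseries : HasSum (fun n : ℕ => (n.factorial⁻¹ : ℝ) * ((t • (A + 1)) ^ n) 0 m)
      (t ^ (m : ℕ) / (m : ℕ).factorial) := by
    convert hasSum_single (m : ℕ) fun n hn => ?_ using 1
    · rw [smul_pow, Matrix.smul_apply, hpow, if_pos (Fin.ext (by simp [hm.le]))]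
      simp [div_eq_inv_mul]
    · have hne : m ≠ Fin.clamp n N := by
        simp only [ne_eq, Fin.ext_iff, Fin.coe_clamp]
        omega
      rw [smul_pow, Matrix.smul_apply, hpow, if_neg hne]
      simp
  have hsplit : t • A = (-t) • 1 + t • (A + 1) := by module
  rw [hsplit, Matrix.exp_smul_one_add, ← Real.exp_eq_exp_ℝ, Matrix.smul_apply,
    (Matrix.hasSum_exp_apply _ 0 m).unique hseries, smul_eq_mul]
  ring
end

section
/- Let A be the (N+1)×(N+1) real matrix with A_{n,n} = −1 and A_{n,n+1} = 1 for 0 ≤ n ≤ N−1 and all other entries zero. Then for every real t, the (0,N) entry of e^{tA} equals 1 − ∑_{m=0}^{N-1} t^m e^{−t} / m!. -/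
/-!
Let `S` be the upper shift matrix on `Fin (N + 1)`. The span of the first `N` basis vectors is
invariant under `A`, and on it `A` acts as `S - 1`; hence the first `N` entries of row `0` of
`e^{tA}` are those of `e^{t(S - 1)} = e^{-t} e^{tS}`, namely `t^m e^{-t} / m!`. The rows of `A`
sum to zero, so `e^{tA}` fixes the all-ones vector and row `0` of `e^{tA}` sums to `1`; this
determines the last entry.
-/

open NormedSpace

theorem pow_mul_eq_pow_mul_of_mul_eq {M : Type*} [Monoid M] {x y p : M}
    (hxy : x * p = y * p) (hx : p * x * p = x * p) (n : ℕ) : x ^ n * p = y ^ n * p := by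
  have hy : p * y * p = y * p := by rw [mul_assoc, ← hxy, ← mul_assoc, hx, hxy]
  induction n with
  | zero => simp
  | succ n ih =>
    calc x ^ (n + 1) * p = x ^ n * (p * x * p) := by rw [hx, pow_succ, mul_assoc]
      _ = x ^ n * p * (x * p) := by simp only [mul_assoc]
      _ = y ^ n * p * (y * p) := by rw [ih, hxy]
      _ = y ^ n * (p * y * p) := by simp only [mul_assoc]
      _ = y ^ (n + 1) * p := by rw [hy, pow_succ, mul_assoc]

theorem NormedSpace.exp_mul_eq_exp_mul_of_mul_eq {𝔸 : Type*} [NormedRing 𝔸] [NormedAlgebra ℚ 𝔸]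
    [CompleteSpace 𝔸] {x y p : 𝔸} (hxy : x * p = y * p) (hx : p * x * p = x * p) :
    exp x * p = exp y * p := by
  have hx' := (exp_series_hasSum_exp' (𝕂 := ℚ) x).mul_right p
  have hy' := (exp_series_hasSum_exp' (𝕂 := ℚ) y).mul_right p
  simp only [smul_mul_assoc, pow_mul_eq_pow_mul_of_mul_eq hxy hx] at hx' hy'
  exact hx'.unique hy'

namespace Matrix

section RCLike

variable {m 𝕂 : Type*} [Fintype m] [DecidableEq m] [RCLike 𝕂]

theorem exp_mul_eq_exp_mul_of_mul_eq {M M' P : Matrix m m 𝕂} (hMM' : M * P = M' * P)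
    (hM : P * M * P = M * P) : exp M * P = exp M' * P := by
  let : NormedRing (Matrix m m 𝕂) := Matrix.linftyOpNormedRing
  let : NormedAlgebra ℚ (Matrix m m 𝕂) := Matrix.linftyOpNormedAlgebra
  let : NormedAlgebra 𝕂 (Matrix m m 𝕂) := Matrix.linftyOpNormedAlgebra
  -- completeness for the operator-norm uniformity, which instance search does not find
  exact @NormedSpace.exp_mul_eq_exp_mul_of_mul_eq _ _ _ (FiniteDimensional.complete 𝕂 _) _ _ _
    hMM' hM

theorem sum_exp_apply_eq_one {M : Matrix m m 𝕂} (hM : ∀ i, ∑ j, M i j = 0) (i : m) :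
    ∑ j, exp M i j = 1 := by
  have hJ : M * of (fun _ _ => 1) = 0 * of (fun _ _ => 1) := by ext i j; simp [mul_apply, hM]
  have h := congr($(exp_mul_eq_exp_mul_of_mul_eq hJ (by rw [mul_assoc, hJ]; simp)) i i)
  rw [exp_zero, one_mul] at h
  simpa [mul_apply] using h

theorem exp_apply_eq_of_invariant_cols (p : m → Prop) [DecidablePred p] {M M' : Matrix m m 𝕂}
    (hMM' : ∀ i j, p j → M i j = M' i j) (hM : ∀ i j, p j → ¬ p i → M i j = 0)
    (i : m) {j : m} (hj : p j) : exp M i j = exp M' i j := by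
  let P : Matrix m m 𝕂 := diagonal fun k => if p k then 1 else 0
  have h := exp_mul_eq_exp_mul_of_mul_eq (M := M) (M' := M') (P := P) ?_ ?_
  · simpa [P, hj] using congr($h i j)
  · ext k l; by_cases hl : p l <;> simp [P, hl, hMM']
  · ext k l; by_cases hl : p l <;> by_cases hk : p k <;> simp [P, hl, hk, hM]

theorem exp_smul_one (t : 𝕂) : exp (t • (1 : Matrix m m 𝕂)) = exp t • 1 := by
  rw [smul_one_eq_diagonal, exp_diagonal, Pi.exp_def, smul_one_eq_diagonal]

theorem exp_smul_sub_one (t : 𝕂) (M : Matrix m m 𝕂) :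
    exp (t • (M - 1)) = exp (-t) • exp (t • M) := by
  rw [smul_sub, sub_eq_neg_add, ← neg_smul,
    exp_add_of_commute _ _ ((Commute.one_left M).smul_left (-t) |>.smul_right t), exp_smul_one,
    smul_one_mul]

end RCLike

def upperShift (R : Type*) [Zero R] [One R] (n : ℕ) : Matrix (Fin n) (Fin n) R :=
  of fun i j => if (j : ℕ) = i + 1 then 1 else 0

@[simp]
theorem upperShift_apply {R : Type*} [Zero R] [One R] {n : ℕ} (i j : Fin n) :
    upperShift R n i j = if (j : ℕ) = i + 1 then 1 else 0 :=
  rfl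

theorem upperShift_pow_apply {R : Type*} [Semiring R] (n k : ℕ) (i j : Fin n) :
    (upperShift R n ^ k) i j = if (j : ℕ) = i + k then 1 else 0 := by
  induction k generalizing i with
  | zero => simp [one_apply, Fin.ext_iff, eq_comm]
  | succ k ih =>
    rw [pow_succ', mul_apply]
    by_cases hi : (i : ℕ) + 1 < n
    · rw [Finset.sum_eq_single ⟨i + 1, hi⟩, ih]
      · simp [add_assoc, add_comm 1 k]
      · intro l _ hl
        simp only [ne_eq, Fin.ext_iff] at hl
        simp [hl]
      · simp
    · rw [if_neg (by omega)]
      exact Finset.sum_eq_zero fun l _ => by simp [ih]; omega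

theorem exp_smul_upperShift_apply {𝕂 : Type*} [RCLike 𝕂] (n : ℕ) (t : 𝕂) (i j : Fin n) :
    exp (t • upperShift 𝕂 n) i j =
      if (i : ℕ) ≤ j then t ^ (j - i : ℕ) / (j - i : ℕ).factorial else 0 := by
  have hnil : ∀ k, n ≤ k → (t • upperShift 𝕂 n) ^ k = 0 := by
    intro k hk; ext i j
    rw [smul_pow, smul_apply, upperShift_pow_apply, if_neg (by omega), smul_zero, zero_apply]
  rw [congrFun exp_eq_tsum_rat, tsum_eq_sum (s := Finset.range n) fun k hk => by
    rw [hnil k (by simpa using hk), smul_zero], sum_apply]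
  simp only [smul_pow, smul_apply, upperShift_pow_apply, smul_eq_mul, mul_ite, mul_one, mul_zero]
  split_ifs with hij
  · rw [Finset.sum_eq_single (j - i : ℕ)]
    · rw [if_pos (by omega), Rat.smul_def]
      push_cast
      ring
    · intro k _ hk; rw [if_neg (by omega), smul_zero]
    · intro h; simp at h; omega
  · exact Finset.sum_eq_zero fun k _ => by rw [if_neg (by omega), smul_zero]

end Matrix

theorem exp_last_entry_of_bidiagonal (N : ℕ) (A : Matrix (Fin (N + 1)) (Fin (N + 1)) ℝ)
    (hA : ∀ i j : Fin (N + 1),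
      A i j = if (i : ℕ) < N ∧ (j : ℕ) = (i : ℕ) then -1
        else if (i : ℕ) < N ∧ (j : ℕ) = (i : ℕ) + 1 then 1 else 0) :
    ∀ t : ℝ,
      (exp (t • A)) 0 (Fin.last N) =
        1 - ∑ m ∈ Finset.range N, t ^ m * Real.exp (-t) / (Nat.factorial m) := by
  intro t
  have hrow (i : Fin (N + 1)) : ∑ j, (t • A) i j = 0 := by
    simp only [Matrix.smul_apply, smul_eq_mul, ← Finset.mul_sum, hA]
    rw [Fin.sum_univ_eq_sum_range (fun b => if (i : ℕ) < N ∧ b = (i : ℕ) then (-1 : ℝ)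
      else if (i : ℕ) < N ∧ b = (i : ℕ) + 1 then 1 else 0)]
    by_cases hi : (i : ℕ) < N
    · simp [hi, hi.le, Finset.sum_ite, Finset.filter_eq', Finset.filter_ne']
    · simp [hi]
  have hcols (i j : Fin (N + 1)) (hj : (j : ℕ) < N) :
      (t • A) i j = (t • (Matrix.upperShift ℝ (N + 1) - 1)) i j := by
    simp only [Matrix.smul_apply, Matrix.sub_apply, Matrix.upperShift_apply, Matrix.one_apply,
      Fin.ext_iff, hA]
    split_ifs <;> first | (exfalso; omega) | simp
  have hlast (i j : Fin (N + 1)) (_ : (j : ℕ) < N) (hi : ¬ (i : ℕ) < N) : (t • A) i j = 0 := by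
    simp [hA, hi]
  have hentry (j : Fin N) :
      exp (t • A) 0 j.castSucc = t ^ (j : ℕ) * Real.exp (-t) / (j : ℕ).factorial := by
    rw [Matrix.exp_apply_eq_of_invariant_cols (fun k : Fin (N + 1) => (k : ℕ) < N) hcols hlast 0
        (by simp), Matrix.exp_smul_sub_one, Matrix.smul_apply, Matrix.exp_smul_upperShift_apply,
      ← Real.exp_eq_exp_ℝ]
    simp only [Fin.coe_ofNat_eq_mod, Nat.zero_mod, Fin.val_castSucc, zero_le, ↓reduceIte,
      tsub_zero, smul_eq_mul]
    ring
  have hsum := Matrix.sum_exp_apply_eq_one hrow 0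
  rw [Fin.sum_univ_castSucc, Finset.sum_congr rfl fun j _ => hentry j,
    Fin.sum_univ_eq_sum_range (fun m => t ^ m * Real.exp (-t) / m.factorial)] at hsum
  linarith
end

section
/- For all real numbers a > 0, a' > 0, and t > 0, (1 − e^{−4at})·(1 + e^{−4at} − 2e^{−2(a+a')t}) ≥ (4aa'/(a+a')²)·(1 − e^{−2(a+a')t})². -/
/-! With `u = 2at`, `v = 2a't`, `X = e^{-u}`, `Y = e^{-v}`, the left-hand side factors as
`(1 - XY)² - X²(X - Y)²`, and since `(u + v)² - 4uv = (u - v)²` the inequality becomes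
`(u + v) X |X - Y| ≤ |u - v| (1 - XY)`. Whichever of `u`, `v` is larger, this reduces to
`s e^{-s} (1 - e^{-d}) ≤ d (1 - e^{-s})` for `s, d ≥ 0`, the product of `s e^{-s} ≤ 1 - e^{-s}`
and `1 - e^{-d} ≤ d`. -/

open Real

lemma mul_exp_neg_le_one_sub_exp_neg (s : ℝ) : s * exp (-s) ≤ 1 - exp (-s) := by
  have hexp : exp s * exp (-s) = 1 := by rw [← exp_add, add_neg_cancel, exp_zero]
  nlinarith [add_one_le_exp s, exp_pos (-s)]

lemma one_sub_exp_neg_nonneg {d : ℝ} (hd : 0 ≤ d) : 0 ≤ 1 - exp (-d) :=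
  sub_nonneg.mpr (exp_le_one_iff.mpr (neg_nonpos.mpr hd))

lemma mul_exp_neg_mul_one_sub_exp_neg_le {s d : ℝ} (hs : 0 ≤ s) (hd : 0 ≤ d) :
    s * exp (-s) * (1 - exp (-d)) ≤ d * (1 - exp (-s)) := by
  rw [mul_comm d]
  exact mul_le_mul (mul_exp_neg_le_one_sub_exp_neg s) (by linarith [one_sub_le_exp_neg d])
    (one_sub_exp_neg_nonneg hd) (one_sub_exp_neg_nonneg hs)

lemma add_mul_abs_exp_neg_mul_sub_le {u v : ℝ} (hu : 0 ≤ u) (hv : 0 ≤ v) :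
    (u + v) * |exp (-u) * (exp (-u) - exp (-v))| ≤ |u - v| * (1 - exp (-(u + v))) := by
  rcases le_total v u with hvu | huv
  · have hd : 0 ≤ u - v := sub_nonneg.mpr hvu
    have hprod : exp (-u) * (exp (-u) - exp (-v)) = -(exp (-(u + v)) * (1 - exp (-(u - v)))) := by
      rw [mul_sub, mul_one_sub, ← exp_add, ← exp_add, ← exp_add]; ring_nf
    rw [hprod, abs_neg, abs_of_nonneg (mul_nonneg (exp_pos _).le (one_sub_exp_neg_nonneg hd)),
      abs_of_nonneg hd, ← mul_assoc]
    exact mul_exp_neg_mul_one_sub_exp_neg_le (by positivity) hd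
  · have hd : 0 ≤ v - u := sub_nonneg.mpr huv
    have hprod : exp (-u) * (exp (-u) - exp (-v)) = exp (-(2 * u)) * (1 - exp (-(v - u))) := by
      rw [mul_sub, mul_one_sub, ← exp_add, ← exp_add, ← exp_add]; ring_nf
    have hsum : exp (-(u + v)) = exp (-(2 * u)) * exp (-(v - u)) := by
      rw [← exp_add]; ring_nf
    rw [hprod, abs_of_nonneg (mul_nonneg (exp_pos _).le (one_sub_exp_neg_nonneg hd)),
      abs_sub_comm, abs_of_nonneg hd, hsum]
    -- `u + v = 2u + (v - u)`: the extra term `(v - u) e^{-2u} (1 - e^{-(v-u)})` cancels.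
    linear_combination mul_exp_neg_mul_one_sub_exp_neg_le (by positivity : 0 ≤ 2 * u) hd

lemma four_mul_div_sq_mul_one_sub_exp_neg_sq_le {u v : ℝ} (hu : 0 < u) (hv : 0 < v) :
    4 * u * v / (u + v) ^ 2 * (1 - exp (-(u + v))) ^ 2
      ≤ (1 - exp (-(2 * u))) * (1 + exp (-(2 * u)) - 2 * exp (-(u + v))) := by
  have hdiff : (1 - exp (-(2 * u))) * (1 + exp (-(2 * u)) - 2 * exp (-(u + v)))
      = (1 - exp (-(u + v))) ^ 2 - (exp (-u) * (exp (-u) - exp (-v))) ^ 2 := by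
    have h2u : exp (-(2 * u)) = exp (-u) * exp (-u) := by rw [← exp_add]; ring_nf
    have huv : exp (-(u + v)) = exp (-u) * exp (-v) := by rw [← exp_add]; ring_nf
    rw [h2u, huv]; ring
  have hsq := pow_le_pow_left₀ (by positivity) (add_mul_abs_exp_neg_mul_sub_le hu.le hv.le) 2
  rw [mul_pow, mul_pow, sq_abs, sq_abs] at hsq
  rw [hdiff, div_mul_eq_mul_div, div_le_iff₀ (by positivity)]
  linear_combination hsq

theorem lindblad_coefficient_ineq (a a' t : ℝ) (ha : 0 < a) (ha' : 0 < a') (ht : 0 < t) :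
    (1 - Real.exp (-4 * a * t)) * (1 + Real.exp (-4 * a * t) - 2 * Real.exp (-2 * (a + a') * t))
      ≥ (4 * a * a' / (a + a') ^ 2) * (1 - Real.exp (-2 * (a + a') * t)) ^ 2 := by
  have h := four_mul_div_sq_mul_one_sub_exp_neg_sq_le (u := 2 * a * t) (v := 2 * a' * t)
    (by positivity) (by positivity)
  have hcoeff : 4 * (2 * a * t) * (2 * a' * t) / (2 * a * t + 2 * a' * t) ^ 2
      = 4 * a * a' / (a + a') ^ 2 := by
    field_simp
  rw [hcoeff] at h
  convert h using 4 <;> ring_nf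
end

section
/- Let V be a complex matrix with ‖V†V − I‖ ≤ ε, and let H := [[0, V],[V†, 0]] be the associated Hermitian block matrix. Then ‖H³ − H‖ ≤ ε·‖V‖. -/
/-!
Since `H` swaps the two halves of `ℂᴺ ⊕ ℂᴺ`, the matrix `H³ - H` is again off-diagonal, with blocks
`V (V†V - 1)` and `(V†V - 1) V†`, and an off-diagonal block matrix has operator norm at most the
larger of the norms of its two blocks. Each block has norm at most `‖V†V - 1‖ ‖V‖ ≤ ε ‖V‖`.
-/

open scoped Matrix Matrix.Norms.L2Operator

open Matrix

theorem Matrix.fromBlocks_zero_zero_pow_three_sub_self {α : Type*} [Ring α] {m n : Type*}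
    [Fintype m] [Fintype n] [DecidableEq m] [DecidableEq n] (A : Matrix m n α) (B : Matrix n m α) :
    fromBlocks 0 A B 0 ^ 3 - fromBlocks 0 A B 0 =
      fromBlocks 0 (A * (B * A - 1)) ((B * A - 1) * B) 0 := by
  rw [pow_succ, sq, fromBlocks_multiply, fromBlocks_multiply, Matrix.mul_sub, Matrix.sub_mul,
    Matrix.mul_one, Matrix.one_mul, ← Matrix.mul_assoc]
  ext (i | i) (j | j) <;> simp

variable {𝕜 : Type*} [RCLike 𝕜] {l m n o : Type*} [Fintype l] [Fintype m] [Fintype n] [Fintype o]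

theorem EuclideanSpace.norm_toLp_sumElim_sq (f : m → 𝕜) (g : n → 𝕜) :
    ‖WithLp.toLp 2 (Sum.elim f g)‖ ^ 2 = ‖WithLp.toLp 2 f‖ ^ 2 + ‖WithLp.toLp 2 g‖ ^ 2 := by
  simp only [EuclideanSpace.norm_sq_eq, Fintype.sum_sum_type, Sum.elim_inl, Sum.elim_inr]

variable [DecidableEq l] [DecidableEq n]

theorem Matrix.l2_opNorm_fromBlocks_zero_zero_le (A : Matrix m n 𝕜) (B : Matrix o l 𝕜) :
    ‖fromBlocks 0 A B 0‖ ≤ max ‖A‖ ‖B‖ := by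
  rw [l2_opNorm_def]
  refine ContinuousLinearMap.opNorm_le_bound _ (le_max_of_le_left (norm_nonneg A)) fun x => ?_
  set x₁ : EuclideanSpace 𝕜 l := WithLp.toLp 2 fun i => x (Sum.inl i)
  set x₂ : EuclideanSpace 𝕜 n := WithLp.toLp 2 fun i => x (Sum.inr i)
  have hx : x = WithLp.toLp 2 (Sum.elim x₁ x₂) := by ext (i | i) <;> rfl
  have hAx : ‖WithLp.toLp 2 (A *ᵥ x₂)‖ ≤ max ‖A‖ ‖B‖ * ‖x₂‖ :=
    (l2_opNorm_mulVec A x₂).trans (by gcongr; exact le_max_left _ _)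
  have hBx : ‖WithLp.toLp 2 (B *ᵥ x₁)‖ ≤ max ‖A‖ ‖B‖ * ‖x₁‖ :=
    (l2_opNorm_mulVec B x₁).trans (by gcongr; exact le_max_right _ _)
  have hHx : (toEuclideanLin.trans LinearMap.toContinuousLinearMap) (fromBlocks 0 A B 0) x =
      WithLp.toLp 2 (Sum.elim (A *ᵥ x₂) (B *ᵥ x₁)) := by
    rw [hx]
    simp [fromBlocks_mulVec]
  have hsq : ‖WithLp.toLp 2 (Sum.elim (A *ᵥ x₂) (B *ᵥ x₁))‖ ^ 2 ≤ (max ‖A‖ ‖B‖ * ‖x‖) ^ 2 := by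
    rw [hx, EuclideanSpace.norm_toLp_sumElim_sq, mul_pow, EuclideanSpace.norm_toLp_sumElim_sq]
    calc _ ≤ (max ‖A‖ ‖B‖ * ‖x₂‖) ^ 2 + (max ‖A‖ ‖B‖ * ‖x₁‖) ^ 2 := by gcongr
      _ = _ := by simp only [WithLp.toLp_ofLp]; ring
  rw [hHx]
  exact pow_le_pow_iff_left₀ (norm_nonneg _) (by positivity) two_ne_zero |>.mp hsq

theorem block_hamiltonian_cube_close_to_self
    (N : ℕ) (V : Matrix (Fin N) (Fin N) ℂ) (ε : ℝ)
    (h : ‖Vᴴ * V - 1‖ ≤ ε) :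
    ‖(Matrix.fromBlocks 0 V Vᴴ 0) ^ 3 - Matrix.fromBlocks 0 V Vᴴ 0‖ ≤ ε * ‖V‖ := by
  rw [fromBlocks_zero_zero_pow_three_sub_self]
  refine (l2_opNorm_fromBlocks_zero_zero_le _ _).trans (max_le ?_ ?_)
  · calc ‖V * (Vᴴ * V - 1)‖ ≤ ‖V‖ * ‖Vᴴ * V - 1‖ := l2_opNorm_mul _ _
      _ ≤ ε * ‖V‖ := by rw [mul_comm]; gcongr
  · calc ‖(Vᴴ * V - 1) * Vᴴ‖ ≤ ‖Vᴴ * V - 1‖ * ‖Vᴴ‖ := l2_opNorm_mul _ _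
      _ ≤ ε * ‖V‖ := by rw [l2_opNorm_conjTranspose]; gcongr
end

section
/- Let {b_{mm'}}_{m,m'∈[N]} be complex numbers with ∑_{m,m'} |b_{mm'}|² = 1, and let {l_m}_{m∈[N]} be real numbers with 0 ≤ l_m ≤ δ for all m. Then the trace norm of the N²×N² matrix X := ∑_{m,m',n,n'} b_{mm'} b*_{nn'} (l_m − l_n)² |m⟩⟨n| ⊗ |m'⟩⟨n'| is at most 4δ². -/
/-!
In an orthonormal eigenbasis `(eᵢ)` of the Hermitian matrix `X`, the eigenvalues are the diagonal
entries `⟪eᵢ, X eᵢ⟫`, so the trace norm is at most `∑ᵢ ‖⟪eᵢ, X eᵢ⟫‖`. This quantity is subadditive,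
and on a rank-one matrix `x y*` it is `∑ᵢ ‖⟪eᵢ, x⟫‖ ‖⟪eᵢ, y⟫‖ ≤ ‖x‖ ‖y‖` by Cauchy–Schwarz and
Parseval. Expanding `(l_m - l_n)² = l_m² + l_n² - 2 l_m l_n` writes `X = v w* + w v* - 2 u u*`
with `w = b`, `u = l b`, `v = l² b`, so that `‖w‖ = 1`, `‖u‖ ≤ δ`, `‖v‖ ≤ δ²`, and the trace norm
is at most `δ² + δ² + 2 δ² = 4 δ²`.
-/

open scoped Matrix

namespace Matrix

variable {ι κ 𝕜 : Type*} [Fintype ι] [Fintype κ] [RCLike 𝕜]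

noncomputable def diagNormSum (e : OrthonormalBasis κ 𝕜 (EuclideanSpace 𝕜 ι))
    (A : Matrix ι ι 𝕜) : ℝ :=
  ∑ i, ‖star ⇑(e i) ⬝ᵥ (A *ᵥ ⇑(e i))‖

section diagNormSum

variable (e : OrthonormalBasis κ 𝕜 (EuclideanSpace 𝕜 ι))

lemma diagNormSum_add_le (A B : Matrix ι ι 𝕜) :
    diagNormSum e (A + B) ≤ diagNormSum e A + diagNormSum e B := by
  rw [diagNormSum, diagNormSum, diagNormSum, ← Finset.sum_add_distrib]
  gcongr with i
  rw [add_mulVec, dotProduct_add]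
  exact norm_add_le _ _

lemma diagNormSum_sub_le (A B : Matrix ι ι 𝕜) :
    diagNormSum e (A - B) ≤ diagNormSum e A + diagNormSum e B := by
  rw [diagNormSum, diagNormSum, diagNormSum, ← Finset.sum_add_distrib]
  gcongr with i
  rw [sub_mulVec, dotProduct_sub]
  exact norm_sub_le _ _

lemma diagNormSum_vecMulVec_le (x y : EuclideanSpace 𝕜 ι) :
    diagNormSum e (vecMulVec ⇑x (star ⇑y)) ≤ ‖x‖ * ‖y‖ := by
  have hentry : ∀ i, ‖star ⇑(e i) ⬝ᵥ (vecMulVec ⇑x (star ⇑y) *ᵥ ⇑(e i))‖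
      = ‖inner 𝕜 (e i) x‖ * ‖inner 𝕜 (e i) y‖ := by
    intro i
    rw [vecMulVec_mulVec, ← inner_conj_symm (e i) y]
    simp only [op_smul_eq_smul, smul_dotProduct, smul_eq_mul, norm_mul, dotProduct_comm,
      EuclideanSpace.inner_eq_star_dotProduct, RCLike.norm_conj]
    exact mul_comm _ _
  calc diagNormSum e (vecMulVec ⇑x (star ⇑y))
      = ∑ i, ‖inner 𝕜 (e i) x‖ * ‖inner 𝕜 (e i) y‖ := Finset.sum_congr rfl fun i _ => hentry i
    _ ≤ √(∑ i, ‖inner 𝕜 (e i) x‖ ^ 2) * √(∑ i, ‖inner 𝕜 (e i) y‖ ^ 2) :=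
        Real.sum_mul_le_sqrt_mul_sqrt _ _ _
    _ = ‖x‖ * ‖y‖ := by
        rw [e.sum_sq_norm_inner_right, e.sum_sq_norm_inner_right,
          Real.sqrt_sq (norm_nonneg _), Real.sqrt_sq (norm_nonneg _)]

end diagNormSum

lemma IsHermitian.sum_abs_eigenvalues_le_diagNormSum [DecidableEq ι] {A : Matrix ι ι 𝕜}
    (hA : A.IsHermitian) : ∑ i, |hA.eigenvalues i| ≤ diagNormSum hA.eigenvectorBasis A :=
  Finset.sum_le_sum fun i _ => hA.eigenvalues_eq i ▸ RCLike.abs_re_le_norm _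

end Matrix

lemma EuclideanSpace.norm_le_mul_norm_of_forall {ι 𝕜 : Type*} [Fintype ι] [RCLike 𝕜]
    {x y : EuclideanSpace 𝕜 ι} {C : ℝ} (hC : 0 ≤ C) (h : ∀ i, ‖x i‖ ≤ C * ‖y i‖) :
    ‖x‖ ≤ C * ‖y‖ := by
  rw [EuclideanSpace.norm_eq, EuclideanSpace.norm_eq, ← Real.sqrt_sq hC,
    ← Real.sqrt_mul (sq_nonneg C), Finset.mul_sum]
  gcongr with i
  rw [← mul_pow]
  exact pow_le_pow_left₀ (norm_nonneg _) (h i) 2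

theorem trace_norm_bound_for_error_matrix
    (N : ℕ) (b : Fin N → Fin N → ℂ) (l : Fin N → ℝ) (δ : ℝ)
    (hb : ∑ m, ∑ m', ‖b m m'‖ ^ 2 = 1)
    (hl : ∀ m, 0 ≤ l m ∧ l m ≤ δ)
    (X : Matrix (Fin N × Fin N) (Fin N × Fin N) ℂ)
    (hXdef : ∀ p q : Fin N × Fin N,
      X p q = b p.1 p.2 * (starRingEnd ℂ) (b q.1 q.2) * (((l p.1 - l q.1) ^ 2 : ℝ) : ℂ))
    (hX : X.IsHermitian) :
    (∑ i, |hX.eigenvalues i|) ≤ 4 * δ ^ 2 := by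
  set w : EuclideanSpace ℂ (Fin N × Fin N) := WithLp.toLp 2 fun p => b p.1 p.2
  set u : EuclideanSpace ℂ (Fin N × Fin N) := WithLp.toLp 2 fun p => (l p.1 : ℂ) * b p.1 p.2
  set v : EuclideanSpace ℂ (Fin N × Fin N) := WithLp.toLp 2 fun p => (l p.1 : ℂ) ^ 2 * b p.1 p.2
  have hw : ‖w‖ = 1 := by
    rw [EuclideanSpace.norm_eq, Fintype.sum_prod_type]
    simp [w, hb]
  have hu : ‖u‖ ≤ |δ| := by
    have hpt : ∀ p, ‖u p‖ ≤ |δ| * ‖w p‖ := fun p => by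
      simpa [u, w] using mul_le_mul_of_nonneg_right
        (abs_le_abs_of_nonneg (hl p.1).1 (hl p.1).2) (norm_nonneg (b p.1 p.2))
    simpa [hw] using EuclideanSpace.norm_le_mul_norm_of_forall (abs_nonneg δ) hpt
  have hv : ‖v‖ ≤ δ ^ 2 := by
    have hpt : ∀ p, ‖v p‖ ≤ δ ^ 2 * ‖w p‖ := fun p => by
      simpa [v, w] using mul_le_mul_of_nonneg_right
        (pow_le_pow_left₀ (hl p.1).1 (hl p.1).2 2) (norm_nonneg (b p.1 p.2))
    simpa [hw] using EuclideanSpace.norm_le_mul_norm_of_forall (sq_nonneg δ) hpt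
  have hX_eq : X = Matrix.vecMulVec ⇑v (star ⇑w) + Matrix.vecMulVec ⇑w (star ⇑v)
      - Matrix.vecMulVec ⇑((2 : ℂ) • u) (star ⇑u) := by
    ext p q
    simp only [hXdef, Complex.ofReal_pow, Complex.ofReal_sub, WithLp.ofLp_smul,
      Matrix.smul_vecMulVec, Matrix.sub_apply, Matrix.add_apply, Matrix.vecMulVec_apply,
      Pi.star_apply, RCLike.star_def, star_mul', star_pow, Complex.conj_ofReal, Matrix.smul_apply,
      smul_eq_mul, u, w, v]
    ring
  calc ∑ i, |hX.eigenvalues i| ≤ Matrix.diagNormSum hX.eigenvectorBasis X :=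
        hX.sum_abs_eigenvalues_le_diagNormSum
    _ ≤ ‖v‖ * ‖w‖ + ‖w‖ * ‖v‖ + ‖(2 : ℂ) • u‖ * ‖u‖ := by
        generalize hX.eigenvectorBasis = e
        rw [hX_eq]
        refine (Matrix.diagNormSum_sub_le _ _ _).trans (add_le_add
          ((Matrix.diagNormSum_add_le _ _ _).trans (add_le_add ?_ ?_)) ?_) <;>
          exact Matrix.diagNormSum_vecMulVec_le _ _ _
    _ ≤ 4 * δ ^ 2 := by
        rw [hw, norm_smul, Complex.norm_two]
        nlinarith [sq_abs δ, norm_nonneg u]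
end
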